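/- If the priority order π_m satisfies small burden-size priority (a π_m a' implies s(a) ≤ s(a')), then the completion Ĉ'_m satisfies the law of aggregate demand: for all X' ⊆ X and x ∉ X', |Ĉ'_m(X' ∪ {x})| ≥ |Ĉ'_m(X')|. -/

import Mathlib

/-- A contract at a fixed member state: `(asylum seeker, wait time)`.
Asylum seekers are labelled by naturals; `π a` is the priority rank of `a`
(smaller rank = higher priority); wait times are naturals. -/
abbrev Ctr := ℕ × ℕ

open Classical in
/-- Pick, from a nonempty set of contracts, the lowest-wait-time contract of the
highest-priority asylum seeker (lexicographic minimum of (rank, wait, agent)). -/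
noncomputable def pick (π : ℕ → ℕ) (Z : Finset Ctr) (h : Z.Nonempty) : Ctr :=
  let k := (Z.image fun x => toLex ((π x.1 : ℕ), toLex (x.2, x.1))).min'
    (h.image _)
  ((ofLex (ofLex k).2).2, (ofLex (ofLex k).2).1)

open Classical in
/-- One run of the greedy algorithm with fuel.  `excl = true` excludes all
contracts of already accepted asylum seekers (the rule `Ĉ_m`), `excl = false`
excludes only already accepted contracts (the completion `Ĉ'_m`). -/
noncomputable def run (s : ℕ → ℕ) (q : ℕ) (r π : ℕ → ℕ) (excl : Bool)
    (X' : Finset Ctr) : ℕ → Finset Ctr → Finset Ctr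
  | 0, acc => acc
  | n+1, acc =>
    let Z : Finset Ctr := X'.filter fun x =>
      (acc.filter fun y => y.2 = x.2).card < r x.2 ∧
      (excl = true → ∀ y ∈ acc, y.1 ≠ x.1) ∧
      (excl = false → x ∉ acc)
    if q ≤ acc.sum (fun x => s x.1) then acc
    else if h : Z.Nonempty then
      run s q r π excl X' n (insert (pick π Z h) acc)
    else acc

/-- The member state choice rule `Ĉ_m`. -/
noncomputable def Chat (s : ℕ → ℕ) (q : ℕ) (r π : ℕ → ℕ)
    (X' : Finset Ctr) : Finset Ctr :=
  run s q r π true X' (X'.card + 1) ∅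

/-- The completion `Ĉ'_m` of the member state choice rule. -/
noncomputable def Chat' (s : ℕ → ℕ) (q : ℕ) (r π : ℕ → ℕ)
    (X' : Finset Ctr) : Finset Ctr :=
  run s q r π false X' (X'.card + 1) ∅

/-!
Run the greedy algorithm on `X ⊆ Y` in lockstep, with `A` and `B` the contracts accepted so far,
`|A| = |B|`. When the run on `X` accepts `a`, we have `|B| < |A ∪ {a}|`, so the exchange property of
the wait-time capacities yields a contract that the run on `Y` may still accept; since every
contract accepted on `X` precedes every contract still admissible there, the run on `Y` accepts
a contract of priority at least that of `a`, hence of burden at most `s(a)`. Its total burden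
thus never exceeds that of the run on `X`, so it does not stop earlier.
-/

open Finset

theorem exists_mem_notMem_card_filter_lt {α β : Type*} [DecidableEq α] [DecidableEq β]
    (f : α → β) (r : β → ℕ) {A B : Finset α} (hA : ∀ w, #{y ∈ A | f y = w} ≤ r w)
    (hBA : #B < #A) : ∃ e ∈ A, e ∉ B ∧ #{y ∈ B | f y = f e} < r (f e) := by
  have hmaps (C : Finset α) (hC : C ⊆ A ∪ B) : (C : Set α).MapsTo f ((A ∪ B).image f) :=
    fun z hz => mem_image_of_mem f (hC hz)
  rw [card_eq_sum_card_fiberwise (hmaps B subset_union_right),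
    card_eq_sum_card_fiberwise (hmaps A subset_union_left)] at hBA
  obtain ⟨w, -, hlt⟩ := exists_lt_of_sum_lt hBA
  obtain ⟨e, heA, heB⟩ := not_subset.1 fun hsub => (card_le_card hsub).not_gt hlt
  obtain ⟨he, rfl⟩ := mem_filter.1 heA
  exact ⟨e, he, fun he' => heB (mem_filter.2 ⟨he', rfl⟩), hlt.trans_le (hA _)⟩

def key (π : ℕ → ℕ) (x : Ctr) : Lex (ℕ × Lex (ℕ × ℕ)) :=
  toLex (π x.1, toLex (x.2, x.1))

lemma pick_spec (π : ℕ → ℕ) (Z : Finset Ctr) (h : Z.Nonempty) :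
    pick π Z h ∈ Z ∧ key π (pick π Z h) = (Z.image (key π)).min' (h.image _) := by
  classical
  obtain ⟨z, hz, hzk⟩ := mem_image.1 (min'_mem (Z.image (key π)) (h.image _))
  have hpick : pick π Z h = z := by
    change ((ofLex (ofLex ((Z.image (key π)).min' _)).2).2,
      (ofLex (ofLex ((Z.image (key π)).min' _)).2).1) = z
    rw [← hzk]
    rfl
  exact ⟨hpick ▸ hz, hpick ▸ hzk⟩

lemma pick_mem (π : ℕ → ℕ) (Z : Finset Ctr) (h : Z.Nonempty) : pick π Z h ∈ Z :=
  (pick_spec π Z h).1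

lemma key_pick_le (π : ℕ → ℕ) {Z : Finset Ctr} (h : Z.Nonempty) {c : Ctr} (hc : c ∈ Z) :
    key π (pick π Z h) ≤ key π c := by
  rw [(pick_spec π Z h).2]
  exact min'_le _ _ (mem_image_of_mem _ hc)

lemma burden_le_of_key_le {s π : ℕ → ℕ} (hπ : Function.Injective π)
    (hsmall : ∀ a a' : ℕ, π a < π a' → s a ≤ s a') {b a : Ctr} (h : key π b ≤ key π a) :
    s b.1 ≤ s a.1 := by
  rcases Prod.Lex.le_iff.1 h with hlt | ⟨heq, -⟩
  · exact hsmall _ _ hlt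
  · rw [hπ heq]

def load (A : Finset Ctr) (w : ℕ) : ℕ := #{y ∈ A | y.2 = w}

def Feasible (r : ℕ → ℕ) (A : Finset Ctr) : Prop := ∀ w, load A w ≤ r w

/-- The candidate set `Z` of `run` with `excl = false`. -/
def admissible (r : ℕ → ℕ) (X A : Finset Ctr) : Finset Ctr :=
  {c ∈ X | load A c.2 < r c.2 ∧ c ∉ A}

def IsGreedy (π r : ℕ → ℕ) (X A : Finset Ctr) : Prop :=
  ∀ a ∈ A, ∀ c ∈ admissible r X A, key π a ≤ key π c

lemma load_mono {A A' : Finset Ctr} (h : A ⊆ A') (w : ℕ) : load A w ≤ load A' w :=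
  card_le_card (filter_subset_filter _ h)

lemma Feasible.insert {r : ℕ → ℕ} {A : Finset Ctr} (hA : Feasible r A) {a : Ctr}
    (ha : load A a.2 < r a.2) : Feasible r (insert a A) := by
  intro w
  unfold load
  rw [filter_insert]
  split_ifs with hw
  · exact (card_insert_le _ _).trans (hw ▸ ha)
  · exact hA w

lemma mem_admissible_of_insert {r : ℕ → ℕ} {X A : Finset Ctr} {a c : Ctr}
    (hc : c ∈ admissible r X (insert a A)) : c ∈ admissible r X A := by
  obtain ⟨hcX, hload, hcA⟩ := mem_filter.1 hc
  exact mem_filter.2 ⟨hcX, (load_mono (subset_insert a A) _).trans_lt hload,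
    fun h => hcA (mem_insert_of_mem h)⟩

lemma IsGreedy.insert_pick {π r : ℕ → ℕ} {X A : Finset Ctr} (hgr : IsGreedy π r X A)
    (h : (admissible r X A).Nonempty) :
    IsGreedy π r X (insert (pick π (admissible r X A) h) A) := by
  intro a ha c hc
  have hc := mem_admissible_of_insert hc
  rcases mem_insert.1 ha with rfl | ha
  · exact key_pick_le π h hc
  · exact hgr a ha c hc

section run

variable {s : ℕ → ℕ} {q : ℕ} {r π : ℕ → ℕ}

lemma subset_run (e : Bool) (X : Finset Ctr) (n : ℕ) (A : Finset Ctr) :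
    A ⊆ run s q r π e X n A := by
  induction n generalizing A with
  | zero => rw [run]
  | succ n ih =>
    rw [run]
    split_ifs
    · exact subset_rfl
    · exact (subset_insert _ _).trans (ih _)
    · exact subset_rfl

lemma run_false_succ (X : Finset Ctr) (n : ℕ) (A : Finset Ctr) :
    run s q r π false X (n + 1) A =
      if q ≤ ∑ a ∈ A, s a.1 then A
      else if h : (admissible r X A).Nonempty then
        run s q r π false X n (insert (pick π (admissible r X A) h) A)
      else A := by
  rw [run]
  simp only [Bool.false_eq_true, false_implies, true_implies, true_and]
  rfl

lemma exists_key_pick_le {X Y A B : Finset Ctr} (hXY : X ⊆ Y) (hAX : A ⊆ X)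
    (hA : Feasible r A) (hgr : IsGreedy π r X A) (hcard : #B = #A)
    (h : (admissible r X A).Nonempty) :
    ∃ h' : (admissible r Y B).Nonempty,
      key π (pick π _ h') ≤ key π (pick π (admissible r X A) h) := by
  set a := pick π (admissible r X A) h
  obtain ⟨haX, hload, haA⟩ := mem_filter.1 (pick_mem π _ h)
  have hBA : #B < #(insert a A) := by rw [card_insert_of_notMem haA]; omega
  obtain ⟨e, heA, heB, he⟩ := exists_mem_notMem_card_filter_lt Prod.snd r (hA.insert hload) hBA
  have heX : e ∈ X := (insert_subset haX hAX) heA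
  have he : e ∈ admissible r Y B := mem_filter.2 ⟨hXY heX, he, heB⟩
  refine ⟨⟨e, he⟩, (key_pick_le π _ he).trans ?_⟩
  rcases mem_insert.1 heA with rfl | heA
  · exact le_rfl
  · exact hgr e heA a (pick_mem π _ h)

lemma card_run_le_card_run (hπ : Function.Injective π)
    (hsmall : ∀ a a' : ℕ, π a < π a' → s a ≤ s a') {X Y : Finset Ctr} (hXY : X ⊆ Y)
    {n m : ℕ} (hnm : n ≤ m) {A B : Finset Ctr} (hAX : A ⊆ X) (hA : Feasible r A)
    (hgr : IsGreedy π r X A) (hcard : #B = #A) (hsum : ∑ b ∈ B, s b.1 ≤ ∑ a ∈ A, s a.1) :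
    #(run s q r π false X n A) ≤ #(run s q r π false Y m B) := by
  induction n generalizing m A B with
  | zero => rw [run]; exact hcard ▸ card_le_card (subset_run _ _ _ _)
  | succ n ih =>
    have hstop (m : ℕ) : #A ≤ #(run s q r π false Y m B) :=
      hcard ▸ card_le_card (subset_run _ _ _ _)
    obtain ⟨m, rfl⟩ : ∃ m', m = m' + 1 := ⟨m - 1, by omega⟩
    rw [run_false_succ X]
    by_cases hq : q ≤ ∑ a ∈ A, s a.1
    · rw [if_pos hq]; exact hstop _
    by_cases h : (admissible r X A).Nonempty
    swap
    · rw [if_neg hq, dif_neg h]; exact hstop _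
    obtain ⟨h', hkey⟩ := exists_key_pick_le hXY hAX hA hgr hcard h
    obtain ⟨haX, hload, haA⟩ := mem_filter.1 (pick_mem π _ h)
    have hbB := (mem_filter.1 (pick_mem π _ h')).2.2
    rw [run_false_succ Y, if_neg hq, dif_pos h, if_neg fun hq' => hq (hq'.trans hsum), dif_pos h']
    refine ih (m := m) (by omega) (insert_subset haX hAX) (hA.insert hload)
      (hgr.insert_pick h) ?_ ?_
    · rw [card_insert_of_notMem haA, card_insert_of_notMem hbB, hcard]
    · rw [sum_insert haA, sum_insert hbB]
      exact add_le_add (burden_le_of_key_le hπ hsmall hkey) hsum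

theorem card_chat'_le_of_subset (hπ : Function.Injective π)
    (hsmall : ∀ a a' : ℕ, π a < π a' → s a ≤ s a') {X Y : Finset Ctr} (hXY : X ⊆ Y) :
    #(Chat' s q r π X) ≤ #(Chat' s q r π Y) :=
  card_run_le_card_run hπ hsmall hXY (by simpa using card_le_card hXY) (empty_subset X)
    (fun _ => by simp [load]) (by simp [IsGreedy]) rfl le_rfl

end run

theorem chat'_lad_of_small_general (s : ℕ → ℕ) (q : ℕ) (r π : ℕ → ℕ)
    (hπ : Function.Injective π)
    (hsmall : ∀ a a' : ℕ, π a < π a' → s a ≤ s a')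
    (X' : Finset Ctr) (x : Ctr) :
    (Chat' s q r π X').card ≤ (Chat' s q r π (insert x X')).card :=
  card_chat'_le_of_subset hπ hsmall (subset_insert x X')

/-- Proposition 2(iv): under small burden-size priority
(higher priority, i.e. smaller rank, implies weakly smaller burden-size), the
completion `Ĉ'_m` satisfies the law of aggregate demand. -/
theorem chat'_lad_of_small (s : ℕ → ℕ) (q : ℕ) (r π : ℕ → ℕ)
    (hπ : Function.Injective π)
    (hsmall : ∀ a a' : ℕ, π a < π a' → s a ≤ s a')
    (X' : Finset Ctr) (x : Ctr) (hx : x ∉ X') :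
    (Chat' s q r π X').card ≤ (Chat' s q r π (insert x X')).card :=
  chat'_lad_of_small_general s q r π hπ hsmall X' x
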